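/- In the partial information model, the difference query satisfies: for an ordered list (i_1,...,i_k) of agents, defining diff(i) = E[Y | S_i] and diff(i_1,...,i_k) = E[Y - Σ_{1 ≤ j < k} diff(i_1,...,i_j) | S_{i_k}], we have diff(i_1,...,i_k) = Σ_{T : i_k ∈ T, i_ℓ ∉ T for all ℓ < k} X_T, i.e., the conditional expectation of Y given the signals observed by agent i_k but by none of agents i_1,...,i_{k-1}. -/

import Mathlib

/-!
Induct along the suffixes of the list. The earlier queries have removed from `Y` exactly the
signals `X T` with `T` meeting one of `i_1, …, i_{k-1}`: each such `T` is counted once, by the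
query of the first of these agents that sees it. Conditioning the remaining sum on `S_{i_k}` keeps
the `X T` with `i_k ∈ T`, which are `S_{i_k}`-measurable, and replaces the others, which are
independent of `S_{i_k}`, by their mean `0`.
-/

open MeasureTheory ProbabilityTheory

/-- The σ-algebra generated by agent `i`'s signals `{X T : i ∈ T}`. -/
def agentSigma {Ω : Type*} {n : ℕ} (X : Finset (Fin n) → Ω → ℝ) (i : Fin n) :
    MeasurableSpace Ω :=
  ⨆ T ∈ {T : Finset (Fin n) | i ∈ T}, MeasurableSpace.comap (X T) inferInstance

/-- Difference query, with lists in reverse order: for `L = [i_k, …, i_1]`,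
`diffQ X L` is `diff(i_1, …, i_k)` of the paper.  `diffQ X [] = 0` and
`diffQ X (i :: L) = E[Y − ∑_{nonempty suffixes L' of L} diffQ X L' ∣ S_i]`,
i.e. `diff(i_1,…,i_k) = E[Y − ∑_{1 ≤ j < k} diff(i_1,…,i_j) ∣ S_{i_k}]`. -/
noncomputable def diffQ {Ω : Type*} [MeasureSpace Ω] {n : ℕ}
    (X : Finset (Fin n) → Ω → ℝ) : List (Fin n) → Ω → ℝ
  | [] => 0
  | (i :: L) =>
      (ℙ : Measure Ω)[(fun ω => (∑ T : Finset (Fin n), X T ω)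
        - ∑ j ∈ Finset.range L.length, diffQ X (L.drop j) ω) | agentSigma X i]
  termination_by L => L.length
  decreasing_by
    simp only [List.length_drop, List.length_cons]
    omega

open Finset

section FreshSets

variable {α : Type*} [Fintype α] [DecidableEq α]

def avoiding (L : List α) : Finset (Finset α) := {T | ∀ j ∈ L, j ∉ T}

def freshSets : List α → Finset (Finset α)
  | [] => ∅
  | i :: L => {T ∈ avoiding L | i ∈ T}

theorem avoiding_cons (i : α) (L : List α) : avoiding (i :: L) = {T ∈ avoiding L | i ∉ T} := by
  ext T
  simp [avoiding, and_comm]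

theorem freshSets_cons (i : α) (L : List α)
    [DecidablePred fun T : Finset α => i ∈ T ∧ ∀ j ∈ L, j ∉ T] :
    freshSets (i :: L) = univ.filter fun T => i ∈ T ∧ ∀ j ∈ L, j ∉ T := by
  ext T
  simp [freshSets, avoiding, and_comm]

theorem sum_sub_sum_freshSets_drop {M : Type*} [AddCommGroup M] (f : Finset α → M)
    (L : List α) :
    ∑ T, f T - ∑ j ∈ range L.length, ∑ T ∈ freshSets (L.drop j), f T = ∑ T ∈ avoiding L, f T := by
  induction L with
  | nil => simp [avoiding]
  | cons a L ih =>
    rw [List.length_cons, sum_range_succ', sub_add_eq_sub_sub]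
    simp only [List.drop_succ_cons, List.drop_zero]
    rw [ih, sub_eq_iff_eq_add', avoiding_cons, freshSets,
      sum_filter_add_sum_filter_not (avoiding L) (a ∈ ·)]

end FreshSets

section AgentSigma

variable {Ω : Type*} {n : ℕ} {X : Finset (Fin n) → Ω → ℝ} {i : Fin n} {T : Finset (Fin n)}

theorem comap_le_agentSigma (hiT : i ∈ T) :
    MeasurableSpace.comap (X T) inferInstance ≤ agentSigma X i :=
  le_iSup₂ (f := fun T (_ : T ∈ {T : Finset (Fin n) | i ∈ T}) =>
    MeasurableSpace.comap (X T) inferInstance) T hiT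

variable [MeasurableSpace Ω] {μ : Measure Ω}

theorem agentSigma_le (hmeas : ∀ T, Measurable (X T)) (i : Fin n) :
    agentSigma X i ≤ ‹MeasurableSpace Ω› :=
  iSup₂_le fun T _ => (hmeas T).comap_le

theorem indep_comap_agentSigma (hindep : iIndepFun X μ) (hmeas : ∀ T, Measurable (X T))
    (hiT : i ∉ T) : Indep (MeasurableSpace.comap (X T) inferInstance) (agentSigma X i) μ := by
  have h := indep_biSup_compl (fun T => (hmeas T).comap_le)
    ((iIndepFun_iff_iIndep _ _ _).mp hindep) {T}
  simp only [Set.mem_singleton_iff, iSup_iSup_eq_left] at h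
  refine indep_of_indep_of_le_right h (iSup₂_le fun T' hT' => ?_)
  refine le_iSup₂ (f := fun T' (_ : T' ∈ ({T} : Set (Finset (Fin n)))ᶜ) =>
    MeasurableSpace.comap (X T') inferInstance) T' ?_
  rintro rfl
  exact hiT hT'

variable [IsFiniteMeasure μ]

theorem condExp_agentSigma_of_mem (hmeas : ∀ T, Measurable (X T)) (hint : Integrable (X T) μ)
    (hiT : i ∈ T) : μ[X T | agentSigma X i] = X T :=
  condExp_of_stronglyMeasurable (agentSigma_le hmeas i)
    (Measurable.of_comap_le (comap_le_agentSigma hiT)).stronglyMeasurable hint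

theorem condExp_agentSigma_of_notMem (hindep : iIndepFun X μ) (hmeas : ∀ T, Measurable (X T))
    (hiT : i ∉ T) : μ[X T | agentSigma X i] =ᵐ[μ] fun _ => μ[X T] :=
  condExp_indep_eq (hmeas T).comap_le (agentSigma_le hmeas i)
    (Measurable.of_comap_le le_rfl).stronglyMeasurable (indep_comap_agentSigma hindep hmeas hiT)

theorem condExp_sum_agentSigma (hindep : iIndepFun X μ) (hmeas : ∀ T, Measurable (X T))
    (hint : ∀ T, Integrable (X T) μ) (hmean : ∀ T, μ[X T] = 0) (i : Fin n)
    (S : Finset (Finset (Fin n))) :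
    μ[fun ω => ∑ T ∈ S, X T ω | agentSigma X i] =ᵐ[μ] fun ω => ∑ T ∈ S with i ∈ T, X T ω := by
  have hterm : ∀ T ∈ S, μ[X T | agentSigma X i] =ᵐ[μ] if i ∈ T then X T else 0 := by
    intro T _
    split_ifs with hiT
    · exact (condExp_agentSigma_of_mem hmeas (hint T) hiT).eventuallyEq
    · simpa [hmean T, Pi.zero_def] using condExp_agentSigma_of_notMem hindep hmeas hiT
  rw [← sum_fn]
  filter_upwards [condExp_finsetSum (fun T _ => hint T) (agentSigma X i),
    (Filter.eventually_all_finset S).2 hterm] with ω hsum hterms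
  rw [hsum, Finset.sum_apply, sum_congr rfl hterms, sum_filter]
  exact sum_congr rfl fun T _ => by split_ifs <;> rfl

end AgentSigma

theorem diffQ_ae_eq_sum_freshSets {Ω : Type*} [MeasureSpace Ω]
    [IsProbabilityMeasure (ℙ : Measure Ω)] {n : ℕ} {X : Finset (Fin n) → Ω → ℝ}
    (hindep : iIndepFun X ℙ) (hmeas : ∀ T, Measurable (X T)) (hint : ∀ T, Integrable (X T) ℙ)
    (hmean : ∀ T, ∫ ω, X T ω ∂ℙ = 0) :
    ∀ L : List (Fin n), diffQ X L =ᵐ[ℙ] fun ω => ∑ T ∈ freshSets L, X T ω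
  | [] => by
    rw [diffQ]
    rfl
  | i :: L => by
    have ih (j : ℕ) : diffQ X (L.drop j) =ᵐ[ℙ] fun ω => ∑ T ∈ freshSets (L.drop j), X T ω :=
      diffQ_ae_eq_sum_freshSets hindep hmeas hint hmean (L.drop j)
    have residual : (fun ω => ∑ T, X T ω - ∑ j ∈ range L.length, diffQ X (L.drop j) ω)
        =ᵐ[ℙ] fun ω => ∑ T ∈ avoiding L, X T ω := by
      filter_upwards [ae_all_iff.2 ih] with ω hω
      simp only [hω]
      exact sum_sub_sum_freshSets_drop (X · ω) L
    rw [diffQ]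
    exact (condExp_congr_ae residual).trans
      (condExp_sum_agentSigma hindep hmeas hint hmean i _)
termination_by L => L.length
decreasing_by
  simp only [List.length_drop, List.length_cons]
  omega

theorem stmt4_general {Ω : Type*} [MeasureSpace Ω] [IsProbabilityMeasure (ℙ : Measure Ω)]
    (n : ℕ) (X : Finset (Fin n) → Ω → ℝ)
    (hindep : iIndepFun X ℙ)
    (hmeas : ∀ T, Measurable (X T))
    (hL2 : ∀ T, MemLp (X T) 2 ℙ)
    (hmean : ∀ T, ∫ ω, X T ω ∂ℙ = 0)
    (i : Fin n) (L : List (Fin n)) :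
    diffQ X (i :: L)
      =ᵐ[ℙ] fun ω => ∑ T ∈ Finset.univ.filter
        (fun T : Finset (Fin n) => i ∈ T ∧ ∀ j ∈ L, j ∉ T), X T ω :=
  freshSets_cons i L ▸
    diffQ_ae_eq_sum_freshSets hindep hmeas (fun T => (hL2 T).integrable one_le_two) hmean (i :: L)

/-- In the partial information model, the difference query
`diff(i_1, …, i_k)` equals (a.s.) the sum of `X T` over those `T` containing
`i_k` but none of `i_1, …, i_{k-1}`, i.e. the conditional expectation of `Y`
given the signals seen by `i_k` but by none of the earlier agents. -/
theorem stmt4 {Ω : Type*} [MeasureSpace Ω] [IsProbabilityMeasure (ℙ : Measure Ω)]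
    (n : ℕ) (X : Finset (Fin n) → Ω → ℝ)
    (hindep : iIndepFun X ℙ)
    (hmeas : ∀ T, Measurable (X T))
    (hL2 : ∀ T, MemLp (X T) 2 ℙ)
    (hmean : ∀ T, ∫ ω, X T ω ∂ℙ = 0)
    (hempty : X ∅ = 0)
    (i : Fin n) (L : List (Fin n)) :
    diffQ X (i :: L)
      =ᵐ[ℙ] fun ω => ∑ T ∈ Finset.univ.filter
        (fun T : Finset (Fin n) => i ∈ T ∧ ∀ j ∈ L, j ∉ T), X T ω :=
  stmt4_general n X hindep hmeas hL2 hmean i L
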